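/- Let G ∈ 𝓕, let 0 < ε ≤ 1, let p ∈ ℕ, and let (y_i)_{i=0}^p be a finite trajectory of y_0 under G with y_0 < ε. Then there exists a descending interval trajectory ([a_i, b_i])_{i=0}^p under G such that [a_0, b_0] ⊆ [ε/9, 1], [a_i, b_i] ⊆ [y_i − ε, y_i + ε] for each i ∈ {0, 1, ..., p}, and b_p − a_p ≥ ε²/9. -/
import Mathlib


open Set Filter Topology

/-- One-sided Mahavier product of a relation `F` on `X`. -/
def MahavierPlus {X : Type*} (F : Set (X × X)) : Set (ℕ → X) :=
  {x | ∀ n : ℕ, (x n, x (n + 1)) ∈ F}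

/-- Two-sided Mahavier product of a relation `F` on `X`. -/
def MahavierTwo {X : Type*} (F : Set (X × X)) : Set (ℤ → X) :=
  {x | ∀ n : ℤ, (x n, x (n + 1)) ∈ F}

/-- The shift map on the one-sided Mahavier product. -/
def shiftPlus {X : Type*} (F : Set (X × X)) (x : MahavierPlus F) : MahavierPlus F :=
  ⟨fun n => (x : ℕ → X) (n + 1), fun n => x.2 (n + 1)⟩

/-- The shift map on the two-sided Mahavier product. -/
def shiftTwo {X : Type*} (F : Set (X × X)) (x : MahavierTwo F) : MahavierTwo F :=
  ⟨fun n => (x : ℤ → X) (n + 1), fun n => x.2 (n + 1)⟩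

/-- The metric `D(x,y) = sup_{n ≥ 1} d(x_n, y_n)/2^n` on one-sided sequences
(coordinates are indexed from `0` here, so the weight is `2^(n+1)`). -/
noncomputable def DPlus {X : Type*} [PseudoMetricSpace X] (x y : ℕ → X) : ℝ :=
  ⨆ n : ℕ, dist (x n) (y n) / 2 ^ (n + 1)

/-- The metric `D(x,y) = sup_{n ∈ ℤ} d(x_n, y_n)/2^{|n|}` on two-sided sequences. -/
noncomputable def DTwo {X : Type*} [PseudoMetricSpace X] (x y : ℤ → X) : ℝ :=
  ⨆ n : ℤ, dist (x n) (y n) / 2 ^ n.natAbs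

/-- Topological transitivity. -/
def TopTransitive {Y : Type*} [TopologicalSpace Y] (f : Y → Y) : Prop :=
  ∀ U V : Set Y, IsOpen U → IsOpen V → U.Nonempty → V.Nonempty →
    ∃ n : ℕ, (f^[n] '' U ∩ V).Nonempty

/-- Topological mixing. -/
def TopMixing {Y : Type*} [TopologicalSpace Y] (f : Y → Y) : Prop :=
  ∀ U V : Set Y, IsOpen U → IsOpen V → U.Nonempty → V.Nonempty →
    ∃ n₀ : ℕ, ∀ n : ℕ, n₀ ≤ n → (f^[n] '' U ∩ V).Nonempty

/-- The shadowing property for a map `f` with respect to a distance `dY`. -/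
def ShadowingProp {Y : Type*} (dY : Y → Y → ℝ) (f : Y → Y) : Prop :=
  ∀ ε : ℝ, 0 < ε → ∃ δ : ℝ, 0 < δ ∧ ∀ x : ℕ → Y,
    (∀ k : ℕ, dY (f (x k)) (x (k + 1)) < δ) →
    ∃ y : Y, ∀ k : ℕ, dY (f^[k] y) (x k) < ε

/-- The specification property for a map `f` with respect to a distance `dY`. -/
def SpecProp {Y : Type*} (dY : Y → Y → ℝ) (f : Y → Y) : Prop :=
  ∀ ε : ℝ, 0 < ε → ∃ N : ℕ, 0 < N ∧ ∀ n : ℕ, 0 < n →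
    ∀ x : Fin n → Y, ∀ k l : Fin n → ℕ,
      (∀ i, k i ≤ l i) →
      (∀ i j : Fin n, (i : ℕ) + 1 = (j : ℕ) → l i + N ≤ k j) →
      ∃ y : Y, ∀ i : Fin n, ∀ m : ℕ, k i ≤ m → m ≤ l i →
        dY (f^[m] y) (f^[m] (x i)) ≤ ε

/-- The CR-specification property for the one-sided Mahavier product of `F`. -/
def CRSpec {X : Type*} [PseudoMetricSpace X] (F : Set (X × X)) : Prop :=
  ∀ ε : ℝ, 0 < ε → ∃ N : ℕ, 0 < N ∧ ∀ n : ℕ, 0 < n →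
    ∀ x : Fin n → MahavierPlus F, ∀ k l : Fin n → ℕ,
      (∀ i, k i ≤ l i) →
      (∀ i j : Fin n, (i : ℕ) + 1 = (j : ℕ) → l i + N ≤ k j) →
      ∃ y : MahavierPlus F, ∀ i : Fin n, ∀ m : ℕ, k i ≤ m → m ≤ l i →
        dist ((x i : ℕ → X) m) ((y : ℕ → X) m) ≤ ε

/-- The image of a set under a relation. -/
def relImage {X : Type*} (F : Set (X × X)) (A : Set X) : Set X :=
  {y | ∃ a ∈ A, (a, y) ∈ F}

/-- Composition of relations. -/
def relComp {X : Type*} (F G : Set (X × X)) : Set (X × X) :=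
  {p | ∃ z : X, (p.1, z) ∈ F ∧ (z, p.2) ∈ G}

/-- Iterated composition `F^n` of a relation with itself. -/
def relPow {X : Type*} (F : Set (X × X)) : ℕ → Set (X × X)
  | 0 => {p | p.1 = p.2}
  | n + 1 => relComp (relPow F n) F

/-- Membership in the family `𝓕`: `G = F_A` for some finite set `A` of positive reals
containing `3`, `1`, and `1/2`, all of whose elements lie in `[1/3, 3]`, where
`F_A = {(x,y) ∈ [0,1]² : y = a·x for some a ∈ A}`. -/
def MemFamF (G : Set (ℝ × ℝ)) : Prop :=
  ∃ A : Finset ℝ, (3 : ℝ) ∈ A ∧ (1 : ℝ) ∈ A ∧ (1 / 2 : ℝ) ∈ A ∧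
    (∀ a ∈ A, (1 / 3 : ℝ) ≤ a ∧ a ≤ 3) ∧
    G = {p : ℝ × ℝ | p.1 ∈ Set.Icc (0 : ℝ) 1 ∧ p.2 ∈ Set.Icc (0 : ℝ) 1 ∧
          ∃ a ∈ A, p.2 = a * p.1}

set_option maxHeartbeats 1600000 in
/-- Given `G ∈ 𝓕`, `0 < ε ≤ 1`, and a finite trajectory
`(y_i)_{i=0}^p` under `G` with `y_0 < ε`, there is a descending interval trajectory
`([a_i, b_i])_{i=0}^p` under `G` with `[a_0,b_0] ⊆ [ε/9, 1]`,
`[a_i,b_i] ⊆ [y_i−ε, y_i+ε]` for all `i`, and `b_p − a_p ≥ ε²/9`. -/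
theorem stmt8 (G : Set (ℝ × ℝ)) (hG : MemFamF G)
    (ε : ℝ) (hε0 : 0 < ε) (hε1 : ε ≤ 1)
    (p : ℕ) (y : ℕ → ℝ) (hmem : ∀ i ≤ p, y i ∈ Set.Icc (0 : ℝ) 1)
    (htraj : ∀ i < p, (y i, y (i + 1)) ∈ G)
    (hy0 : y 0 < ε) :
    ∃ a b : ℕ → ℝ,
      (∀ i ≤ p, a i ≤ b i ∧ Set.Icc (a i) (b i) ⊆ Set.Icc (0 : ℝ) 1) ∧
      Set.Icc (a 0) (b 0) ⊆ Set.Icc (ε / 9) 1 ∧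
      (∀ i < p, Set.Icc (a (i + 1)) (b (i + 1)) ⊆ relImage G (Set.Icc (a i) (b i))) ∧
      (∀ i ≤ p, Set.Icc (a i) (b i) ⊆ Set.Icc (y i - ε) (y i + ε)) ∧
      ε ^ 2 / 9 ≤ b p - a p := by
  classical
  obtain ⟨A, hA3, hA1, hA2, hAb, hGdef⟩ := hG
  have hGmem : ∀ x z a : ℝ, a ∈ A → 0 ≤ x → x ≤ 1 → 0 ≤ z → z ≤ 1 → z = a * x →
      (x, z) ∈ G := by
    intro x z a ha hx0 hx1 hz0 hz1 hz
    rw [hGdef]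
    simp only [Set.mem_setOf_eq, Set.mem_Icc]
    exact ⟨⟨hx0, hx1⟩, ⟨hz0, hz1⟩, a, ha, hz⟩
  have hstep : ∀ i < p, ∃ c : ℝ, c ∈ A ∧ 1/3 ≤ c ∧ c ≤ 3 ∧ y (i+1) = c * y i := by
    intro i hi
    have h := htraj i hi
    rw [hGdef] at h
    simp only [Set.mem_setOf_eq, Set.mem_Icc] at h
    obtain ⟨-, -, c, hc, hyc⟩ := h
    exact ⟨c, hc, (hAb c hc).1, (hAb c hc).2, hyc⟩
  have hy0' : ∀ i ≤ p, 0 ≤ y i := fun i hi => (hmem i hi).1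
  have hy1' : ∀ i ≤ p, y i ≤ 1 := fun i hi => (hmem i hi).2
  have hid : ∀ u v : ℝ, 0 ≤ u → v ≤ 1 → Set.Icc u v ⊆ relImage G (Set.Icc u v) := by
    intro u v hu hv z hz
    obtain ⟨hz1, hz2⟩ := Set.mem_Icc.mp hz
    exact ⟨z, hz, hGmem z z 1 hA1 (hu.trans hz1) (hz2.trans hv) (hu.trans hz1)
      (hz2.trans hv) (one_mul z).symm⟩
  by_cases hall : ∀ i ≤ p, y i < ε/3
  · refine ⟨fun _ => ε/9, fun _ => ε/3, ?_, ?_, ?_, ?_, ?_⟩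
    · intro i _
      exact ⟨by linarith, Set.Icc_subset_Icc (by linarith) (by linarith)⟩
    · exact Set.Icc_subset_Icc le_rfl (by linarith)
    · intro i _
      exact hid (ε/9) (ε/3) (by linarith) (by linarith)
    · intro i hi
      have h1 := hall i hi
      have h2 := hy0' i hi
      exact Set.Icc_subset_Icc (by linarith) (by linarith)
    · nlinarith
  · push_neg at hall
    obtain ⟨i₀, hi₀p, hi₀⟩ := hall
    obtain ⟨m, hmp, hPm, hmgt⟩ :
        ∃ m ≤ p, ε/3 ≤ y m ∧ ∀ j, m < j → j ≤ p → y j < ε/3 := by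
      refine ⟨Nat.findGreatest (fun i => ε/3 ≤ y i) p, Nat.findGreatest_le p,
        Nat.findGreatest_spec (P := fun i => ε/3 ≤ y i) hi₀p hi₀, ?_⟩
      intro j h1 h2
      exact not_le.mp (Nat.findGreatest_is_greatest (P := fun i => ε/3 ≤ y i) h1 h2)
    obtain ⟨q, hqm, hqlow, hq3⟩ :
        ∃ q, q ≤ m ∧ (∀ i < q, y i < ε/3) ∧ ε/9 ≤ (1 - ε/3) * y q := by
      by_cases hq0 : ε/9 ≤ (1 - ε/3) * y 0
      · exact ⟨0, Nat.zero_le _, fun i hi => absurd hi (Nat.not_lt_zero i), hq0⟩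
      · have hex : ∃ i, ε/3 ≤ y i := ⟨m, hPm⟩
        refine ⟨Nat.find hex, Nat.find_min' hex hPm, ?_, ?_⟩
        · intro i hi
          exact not_le.mp (Nat.find_min hex hi)
        · have h := Nat.find_spec hex
          have h2 : (2/3 : ℝ) * (ε/3) ≤ (1 - ε/3) * y (Nat.find hex) :=
            mul_le_mul (by linarith) h (by linarith) (by linarith)
          linarith
    refine ⟨fun i => if i < q then ε/9 else (1 - ε/3) * y (min i m),
            fun i => if i < q then ε/3 else y (min i m), ?_, ?_, ?_, ?_, ?_⟩
    · -- a i ≤ b i and within [0,1]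
      intro i hip
      by_cases h : i < q
      · simp only [if_pos h]
        exact ⟨by linarith, Set.Icc_subset_Icc (by linarith) (by linarith)⟩
      · simp only [if_neg h]
        have hkp : min i m ≤ p := le_trans (min_le_right i m) hmp
        have h0 := hy0' _ hkp
        have h1 := hy1' _ hkp
        refine ⟨by nlinarith, Set.Icc_subset_Icc ?_ h1⟩
        exact mul_nonneg (by linarith) h0
    · -- [a 0, b 0] ⊆ [ε/9, 1]
      by_cases h : 0 < q
      · simp only [if_pos h]
        exact Set.Icc_subset_Icc le_rfl (by linarith)
      · have hq0 : q = 0 := by omega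
        simp only [if_neg h, min_eq_left (Nat.zero_le m)]
        have h1 := hy1' 0 (Nat.zero_le p)
        rw [hq0] at hq3
        exact Set.Icc_subset_Icc hq3 h1
    · -- descending steps
      intro i hi
      by_cases h1 : i + 1 < q
      · have h2 : i < q := by omega
        simp only [if_pos h1, if_pos h2]
        exact hid (ε/9) (ε/3) (by linarith) (by linarith)
      · by_cases h2 : i < q
        · -- transition from block to H-form at index q = i+1
          have hq_eq : q = i + 1 := by omega
          have him : i + 1 ≤ m := by omega
          simp only [if_neg h1, if_pos h2, min_eq_left him]
          obtain ⟨c, hcA, hc13, hc3, hyc⟩ := hstep i hi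
          have hyi : y i < ε/3 := hqlow i h2
          have hyi0 : 0 ≤ y i := hy0' i (by omega)
          have h5 : c * y i ≤ 3 * y i := mul_le_mul_of_nonneg_right hc3 hyi0
          have hy1e : y (i+1) ≤ ε := by rw [hyc]; linarith
          have hlow : ε/9 ≤ (1 - ε/3) * y (i+1) := by rw [hq_eq] at hq3; exact hq3
          intro z hz
          obtain ⟨hz1, hz2⟩ := Set.mem_Icc.mp hz
          have hz0 : ε/9 ≤ z := le_trans hlow hz1
          have hzε : z ≤ ε := le_trans hz2 hy1e
          by_cases hz3 : z ≤ ε/3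
          · exact ⟨z, Set.mem_Icc.mpr ⟨hz0, hz3⟩,
              hGmem z z 1 hA1 (by linarith) (by linarith) (by linarith) (by linarith)
                (one_mul z).symm⟩
          · push_neg at hz3
            exact ⟨z/3, Set.mem_Icc.mpr ⟨by linarith, by linarith⟩,
              hGmem (z/3) z 3 hA3 (by linarith) (by linarith) (by linarith) (by linarith)
                (by ring)⟩
        · -- H-form to H-form
          simp only [if_neg h1, if_neg h2]
          rcases lt_or_ge i m with him | him
          · rw [min_eq_left him.le, min_eq_left (by omega : i + 1 ≤ m)]
            obtain ⟨c, hcA, hc13, hc3, hyc⟩ := hstep i hi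
            have hc0 : (0:ℝ) < c := by linarith
            have hyi0 : 0 ≤ y i := hy0' i (by omega)
            have hyi1 : y i ≤ 1 := hy1' i (by omega)
            have hyi11 : y (i+1) ≤ 1 := hy1' (i+1) (by omega)
            have hyi10 : 0 ≤ y (i+1) := hy0' (i+1) (by omega)
            intro z hz
            obtain ⟨hz1, hz2⟩ := Set.mem_Icc.mp hz
            rw [hyc] at hz1 hz2
            have hz0 : 0 ≤ z := by nlinarith [mul_nonneg hc0.le hyi0]
            have hlow' : (1 - ε/3) * y i ≤ z / c := by
              rw [le_div_iff₀ hc0]; nlinarith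
            have hup' : z / c ≤ y i := by
              rw [div_le_iff₀ hc0]; nlinarith
            refine ⟨z/c, Set.mem_Icc.mpr ⟨hlow', hup'⟩,
              hGmem (z/c) z c hcA ?_ (hup'.trans hyi1) hz0 ?_ ?_⟩
            · exact le_trans (mul_nonneg (by linarith) hyi0) hlow'
            · rw [hyc] at hyi11; linarith
            · rw [mul_comm]; exact (div_mul_cancel₀ z hc0.ne').symm
          · rw [min_eq_right him, min_eq_right (by omega : m ≤ i + 1)]
            have h0 : 0 ≤ y m := hy0' m hmp
            have h1' : y m ≤ 1 := hy1' m hmp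
            exact hid _ _ (mul_nonneg (by linarith) h0) h1'
    · -- windows
      intro i hip
      by_cases h : i < q
      · simp only [if_pos h]
        have h1 := hqlow i h
        have h0 := hy0' i hip
        exact Set.Icc_subset_Icc (by linarith) (by linarith)
      · simp only [if_neg h]
        rcases le_or_gt i m with him | him
        · rw [min_eq_left him]
          have h0 := hy0' i hip
          have h1 := hy1' i hip
          refine Set.Icc_subset_Icc (by nlinarith) (by linarith)
        · have hm_lt_p : m < p := by omega
          have hyi_lt : y i < ε/3 := hmgt i him hip
          have hym_le : y m ≤ ε := by
            obtain ⟨c, hcA, hc13, hc3, hyc⟩ := hstep m hm_lt_p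
            have h6 : y (m+1) < ε/3 := hmgt (m+1) (by omega) (by omega)
            have h0 := hy0' m hmp
            have h7 : (1/3 : ℝ) * y m ≤ c * y m := mul_le_mul_of_nonneg_right hc13 h0
            rw [hyc] at h6
            linarith
          rw [min_eq_right him.le]
          have h0m := hy0' m hmp
          have h0i := hy0' i hip
          refine Set.Icc_subset_Icc ?_ (by linarith)
          have : 0 ≤ (1 - ε/3) * y m := mul_nonneg (by linarith) h0m
          linarith
    · -- final length
      have hpq : ¬ p < q := by omega
      simp only [if_neg hpq, min_eq_right hmp]
      have h2 : (ε/3) * (ε/3) ≤ (ε/3) * y m :=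
        mul_le_mul_of_nonneg_left hPm (by linarith)
      nlinarith
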